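/- For every ε > 0 there exist d₀(ε) and an absolute constant c' > 0 such that for every integer d ≥ d₀, every integer q ≥ d⁴, and every real β ≥ (1+ε)·β_o(q,d), the complete graph K_{d+1} on d+1 vertices satisfies Z_{K_{d+1}}(q,β) ≤ (1 + q^{−c'·ε}) · q · e^{β·d(d+1)/2}. -/

import Mathlib

open Finset

/-- The order-disorder threshold `β_o(q,d) = ln((q−2)/((q−1)^{1−2/d} − 1))`. -/
noncomputable def betaO (q : ℝ) (d : ℕ) : ℝ :=
  Real.log ((q - 2) / ((q - 1) ^ ((1 : ℝ) - 2 / d) - 1))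

/-- The number of monochromatic edges of `G` under the coloring `σ`. -/
def monoCount {V : Type*} [Fintype V] [DecidableEq V] (G : SimpleGraph V)
    [DecidableRel G.Adj] {k : ℕ} (σ : V → Fin k) : ℕ :=
  (G.edgeFinset.filter (fun e => ∃ u v : V, e = s(u, v) ∧ σ u = σ v)).card

/-- The Potts model partition function `Z_G(q,β)`. -/
noncomputable def pottsZ {V : Type*} [Fintype V] [DecidableEq V] (G : SimpleGraph V)
    [DecidableRel G.Adj] (q : ℕ) (β : ℝ) : ℝ :=
  ∑ σ : V → Fin q, Real.exp (β * monoCount G σ)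

/-!
Group the colourings of `K_{d+1}` by the size `a` of their largest colour class and put
`j = d + 1 - a`. At most `C(d+1, a) q^{j+1}` colourings have a given `a`, and since the class
sizes `s_c` satisfy `∑ s_c² = 2m + (d + 1)` (`m` the number of monochromatic edges), each has at
least `j · max(a, (d+1)/2)` bichromatic edges. Above `β_o` one has
`β ≥ (1 + ε/2) (2/d) log q`, so every `a ≤ d` contributes at most `q^{2/3 - ε/4} e^{β d(d+1)/2}`:
bound the binomial by `(d+1)^j ≤ q^{j/3}` when `a ≥ 7(d+1)/8`, and by `2^{d+1}` otherwise, where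
`j > (d+1)/8` lets the gain `q^{-εj/2}` absorb `2^{d+1}`. The `d + 1 ≤ q^{1/3}` values `a ≤ d` add up to
`q^{1 - ε/4} e^{β d(d+1)/2}`, and the `q` constant colourings give the main term.
-/

lemma Finset.sum_sq_le_sup_mul_sum {ι : Type*} (s : Finset ι) (f : ι → ℕ) :
    ∑ i ∈ s, f i ^ 2 ≤ s.sup f * ∑ i ∈ s, f i := by
  rw [mul_sum]
  exact sum_le_sum fun i hi => by rw [sq]; exact Nat.mul_le_mul_right _ (le_sup hi)

lemma Finset.sum_sq_le_sup_sq_add_sq {ι : Type*} [DecidableEq ι] (s : Finset ι) (f : ι → ℕ) :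
    ∑ i ∈ s, f i ^ 2 ≤ s.sup f ^ 2 + (∑ i ∈ s, f i - s.sup f) ^ 2 := by
  rcases s.eq_empty_or_nonempty with rfl | hs
  · simp
  obtain ⟨i, hi, hsup⟩ := exists_mem_eq_sup s hs f
  rw [← add_sum_erase s f hi, ← add_sum_erase s _ hi, hsup, Nat.add_sub_cancel_left]
  exact Nat.add_le_add_left (sum_sq_le_sq_sum_of_nonneg fun _ _ => Nat.zero_le _) _

namespace Potts

open Real

section Colorings

variable {V : Type*} {q : ℕ}

def monoGraph (σ : V → Fin q) : SimpleGraph V where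
  Adj u v := u ≠ v ∧ σ u = σ v
  symm := ⟨fun _ _ h => ⟨h.1.symm, h.2.symm⟩⟩
  loopless := ⟨fun _ h => h.1 rfl⟩

@[simp]
lemma monoGraph_adj {σ : V → Fin q} {u v : V} : (monoGraph σ).Adj u v ↔ u ≠ v ∧ σ u = σ v :=
  Iff.rfl

instance [DecidableEq V] (σ : V → Fin q) : DecidableRel (monoGraph σ).Adj :=
  fun u v => inferInstanceAs (Decidable (u ≠ v ∧ σ u = σ v))

variable [Fintype V]

def fiberCard (σ : V → Fin q) (c : Fin q) : ℕ := #{v | σ v = c}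

def maxFiberCard (σ : V → Fin q) : ℕ := univ.sup (fiberCard σ)

lemma sum_fiberCard (σ : V → Fin q) : ∑ c, fiberCard σ c = Fintype.card V :=
  (card_eq_sum_card_fiberwise fun v _ => mem_univ (σ v)).symm

lemma maxFiberCard_le_card (σ : V → Fin q) : maxFiberCard σ ≤ Fintype.card V :=
  Finset.sup_le fun _ _ => card_filter_le _ _

variable [DecidableEq V]

lemma monoCount_top_eq_card_edgeFinset (σ : V → Fin q) :
    monoCount ⊤ σ = #(monoGraph σ).edgeFinset := by
  unfold monoCount
  congr 1
  ext e
  induction e using Sym2.ind with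
  | h u v =>
    simp only [mem_filter, SimpleGraph.mem_edgeFinset, SimpleGraph.mem_edgeSet,
      SimpleGraph.top_adj, monoGraph_adj, Sym2.eq_iff]
    constructor
    · rintro ⟨huv, u', v', h, hσ⟩
      refine ⟨huv, ?_⟩
      rcases h with ⟨rfl, rfl⟩ | ⟨rfl, rfl⟩
      exacts [hσ, hσ.symm]
    · rintro ⟨huv, hσ⟩
      exact ⟨huv, u, v, Or.inl ⟨rfl, rfl⟩, hσ⟩

lemma degree_monoGraph_add_one (σ : V → Fin q) (v : V) :
    (monoGraph σ).degree v + 1 = fiberCard σ (σ v) := by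
  have : ({w | σ w = σ v} : Finset V) = insert v ((monoGraph σ).neighborFinset v) := by
    ext w
    simp only [mem_filter, mem_univ, true_and, mem_insert, SimpleGraph.mem_neighborFinset,
      monoGraph_adj]
    constructor
    · intro h
      by_cases hw : w = v
      exacts [Or.inl hw, Or.inr ⟨Ne.symm hw, h.symm⟩]
    · rintro (rfl | ⟨-, h⟩)
      exacts [rfl, h.symm]
  rw [← SimpleGraph.card_neighborFinset_eq_degree, fiberCard, this,
    card_insert_of_notMem (by simp)]

lemma sum_fiberCard_sq (σ : V → Fin q) :
    ∑ c, fiberCard σ c ^ 2 = 2 * monoCount ⊤ σ + Fintype.card V := by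
  have hsum : ∑ v, fiberCard σ (σ v) = ∑ c, fiberCard σ c ^ 2 := by
    rw [← sum_fiberwise univ σ]
    refine sum_congr rfl fun c _ => ?_
    rw [sum_congr rfl fun v hv => congrArg (fiberCard σ) (mem_filter.1 hv).2, sum_const,
      smul_eq_mul, sq]
    rfl
  rw [← hsum, monoCount_top_eq_card_edgeFinset, ← SimpleGraph.sum_degrees_eq_twice_card_edges,
    ← card_univ, card_eq_sum_ones, ← sum_add_distrib]
  exact sum_congr rfl fun v _ => (degree_monoGraph_add_one σ v).symm

-- Bichromatic edges of `K_n` forced when the largest colour class has `a` vertices.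
noncomputable def bichromaticLowerBound (n a : ℕ) : ℝ := (n - a) * max (a : ℝ) (n / 2)

lemma monoCount_top_le (σ : V → Fin q) :
    (monoCount ⊤ σ : ℝ) ≤ Fintype.card V * (Fintype.card V - 1) / 2
      - bichromaticLowerBound (Fintype.card V) (maxFiberCard σ) := by
  rw [bichromaticLowerBound]
  -- `∑ s_c² = 2m + n` is at most `a n` and at most `a² + (n - a)²`
  have hsq := sum_fiberCard_sq σ
  have hmul := (univ : Finset (Fin q)).sum_sq_le_sup_mul_sum (fiberCard σ)
  have hsplit := (univ : Finset (Fin q)).sum_sq_le_sup_sq_add_sq (fiberCard σ)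
  rw [hsq, sum_fiberCard] at hmul hsplit
  change _ ≤ maxFiberCard σ * _ at hmul
  change _ ≤ maxFiberCard σ ^ 2 + (_ - maxFiberCard σ) ^ 2 at hsplit
  rw [mul_max_of_nonneg _ _ (sub_nonneg.2 (by exact_mod_cast maxFiberCard_le_card σ)),
    le_sub_comm, max_le_iff]
  rw [← Nat.cast_le (α := ℝ)] at hmul hsplit
  push_cast [maxFiberCard_le_card σ] at hmul hsplit
  constructor <;> nlinarith

lemma card_filter_forall_mem_eq {α : Type*} [Fintype α] [DecidableEq α] (S : Finset V) (c : α) :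
    #{σ : V → α | ∀ v ∈ S, σ v = c} = Fintype.card α ^ (Fintype.card V - #S) := by
  have : ({σ : V → α | ∀ v ∈ S, σ v = c} : Finset _)
      = Fintype.piFinset fun v => if v ∈ S then {c} else univ := by
    ext σ
    simp only [mem_filter, mem_univ, true_and, Fintype.mem_piFinset]
    refine ⟨fun h v => ?_, fun h v hv => by simpa [hv] using h v⟩
    split_ifs with hv
    exacts [mem_singleton.2 (h v hv), mem_univ _]
  rw [this, Fintype.card_piFinset]
  simp [apply_ite, prod_ite, filter_not, card_univ_sdiff]

lemma card_filter_maxFiberCard_eq_le (hq : 0 < q) (a : ℕ) :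
    #{σ : V → Fin q | maxFiberCard σ = a}
      ≤ (Fintype.card V).choose a * q * q ^ (Fintype.card V - a) := by
  have hsub : ({σ : V → Fin q | maxFiberCard σ = a} : Finset _)
      ⊆ (powersetCard a univ ×ˢ univ).biUnion
          fun Sc : Finset V × Fin q => {σ | ∀ v ∈ Sc.1, σ v = Sc.2} := by
    intro σ hσ
    obtain ⟨c, -, hc⟩ := exists_mem_eq_sup univ (univ_nonempty_iff.2 ⟨⟨0, hq⟩⟩) (fiberCard σ)
    refine mem_biUnion.2 ⟨((univ.filter fun v => σ v = c), c), ?_, ?_⟩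
    · simpa [← (mem_filter.1 hσ).2, maxFiberCard, fiberCard] using hc.symm
    · simp
  calc _ ≤ _ := card_le_card hsub
    _ ≤ _ := card_biUnion_le
    _ = _ := by
      rw [sum_congr rfl fun Sc hSc => by
        rw [card_filter_forall_mem_eq, (mem_powersetCard.1 (mem_product.1 hSc).1).2]]
      simp [card_powersetCard, mul_assoc]

lemma pottsZ_top_le (hq : 0 < q) {β : ℝ} (hβ : 0 ≤ β) :
    pottsZ (⊤ : SimpleGraph V) q β
      ≤ exp (β * (Fintype.card V * (Fintype.card V - 1) / 2))
        * ∑ a ∈ range (Fintype.card V + 1), (Fintype.card V).choose a * q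
            * q ^ (Fintype.card V - a)
            * exp (-(β * bichromaticLowerBound (Fintype.card V) a)) := by
  rw [pottsZ, ← sum_fiberwise_of_maps_to (t := range (Fintype.card V + 1)) (g := maxFiberCard)
    fun σ _ => mem_range_succ_iff.2 (maxFiberCard_le_card σ), mul_sum]
  refine sum_le_sum fun a _ => ?_
  calc _ ≤ #{σ : V → Fin q | maxFiberCard σ = a} • (exp (β * (Fintype.card V
          * (Fintype.card V - 1) / 2)) * exp (-(β * bichromaticLowerBound (Fintype.card V) a))) :=
        sum_le_card_nsmul _ _ _ fun σ hσ => by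
          rw [← exp_add, ← (mem_filter.1 hσ).2]
          exact exp_le_exp.2 (by nlinarith [monoCount_top_le σ])
    _ ≤ _ := by
      rw [nsmul_eq_mul, mul_left_comm]
      gcongr
      exact_mod_cast card_filter_maxFiberCard_eq_le hq a

end Colorings

lemma add_one_pow_three_le {x : ℝ} (hx : 8 ≤ x) : (x + 1) ^ 3 ≤ x ^ 4 :=
  calc (x + 1) ^ 3 ≤ (2 * x) ^ 3 := by gcongr; linarith
    _ = 8 * x ^ 3 := by ring
    _ ≤ x * x ^ 3 := by gcongr
    _ = x ^ 4 := by ring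

lemma two_div_mul_log_sub_le_betaO {q : ℝ} {d : ℕ} (hq : 2 < q) (hd : 3 ≤ d) :
    2 / d * log q - 2 / (q - 2) ≤ betaO q d := by
  have hd' : (3 : ℝ) ≤ d := by exact_mod_cast hd
  set t : ℝ := 1 - 2 / d
  have ht : 0 < t := by
    have : 2 / (d : ℝ) < 1 := (div_lt_one (by linarith)).2 (by linarith)
    linarith
  have hpow : 1 < (q - 1) ^ t := one_lt_rpow (by linarith) ht
  have hden : log ((q - 1) ^ t - 1) ≤ t * log q :=
    calc log ((q - 1) ^ t - 1) ≤ log ((q - 1) ^ t) := log_le_log (by linarith) (by linarith)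
      _ = t * log (q - 1) := log_rpow (by linarith) t
      _ ≤ t * log q := by gcongr <;> linarith
  have hratio : log q - log (q - 2) ≤ 2 / (q - 2) := by
    rw [← log_div (by linarith) (by linarith)]
    have hsub : q / (q - 2) - 1 = 2 / (q - 2) := by rw [div_sub_one (by linarith)]; ring
    exact hsub ▸ log_le_sub_one_of_pos (div_pos (by linarith) (by linarith))
  rw [betaO, log_div (by linarith) (by linarith)]
  linarith

lemma one_add_half_mul_le_one_add_mul_betaO {q ε : ℝ} {d : ℕ} (hε : 0 < ε) (hd : 3 ≤ d)
    (hq : 4 * d + 2 ≤ q) (hL : 1 ≤ log q) (hεL : 1 ≤ ε * log q) :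
    (1 + ε / 2) * (2 / d * log q) ≤ (1 + ε) * betaO q d := by
  have hd' : (3 : ℝ) ≤ d := by exact_mod_cast hd
  have hq2 : 0 < q - 2 := by linarith
  have hslack : (1 + ε) * (2 / (q - 2)) ≤ ε / 2 * (2 / d * log q) := by
    rw [← sub_nonneg]
    have : ε / 2 * (2 / d * log q) - (1 + ε) * (2 / (q - 2))
        = (ε * log q * (q - 2) - 2 * (1 + ε) * d) / (d * (q - 2)) := by
      field_simp
    rw [this]
    apply div_nonneg _ (by positivity)
    nlinarith [mul_le_mul_of_nonneg_left hεL (by linarith : (0:ℝ) ≤ q - 2),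
      mul_le_mul_of_nonneg_left hL (mul_nonneg hε.le hq2.le)]
  have := mul_le_mul_of_nonneg_left (two_div_mul_log_sub_le_betaO (q := q) (by linarith) hd)
    (by linarith : 0 ≤ 1 + ε)
  linarith

-- Logarithm of the contribution, relative to `e^{β d(d+1)/2}`, of the colourings whose largest
-- class has `d + 1 - j` vertices, when `j ≤ (d + 1) / 8` and when `j ≥ (d + 1) / 8`.
lemma exponent_le_of_dominant_class {ε L d j : ℝ} (hε : 0 < ε) (hL : 0 ≤ L) (hd : 0 < d)
    (hj : 1 ≤ j) (hjd : 8 * j ≤ d + 1) :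
    j * (L / 3) + (1 + j) * L - (1 + ε / 2) * (2 / d * L) * (j * (d + 1 - j))
      ≤ (2 / 3 - ε / 4) * L := by
  have hsize : 7 / 4 ≤ 2 * (d + 1 - j) / d := by rw [le_div_iff₀ hd]; linarith
  have hpenalty : (1 + ε / 2) * (7 / 4) * (j * L) ≤ (1 + ε / 2) * (2 / d * L) * (j * (d + 1 - j)) :=
    calc (1 + ε / 2) * (7 / 4) * (j * L) ≤ (1 + ε / 2) * (2 * (d + 1 - j) / d) * (j * L) := by
          gcongr (1 + ε / 2) * ?_ * (j * L)
      _ = _ := by ring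
  have hjL : L ≤ j * L := le_mul_of_one_le_left hL hj
  have hεjL : ε * L ≤ ε * (j * L) := by gcongr
  have hεL : 0 ≤ ε * L := by positivity
  linarith

lemma exponent_le_of_no_dominant_class {ε L d j : ℝ} (hε : 0 < ε) (hd : 16 ≤ d)
    (hεd : 64 ≤ ε * d) (hεL : 32 ≤ ε * L) (hjd : d + 1 ≤ 8 * j) :
    (d + 1) * log 2 + (1 + j) * L - (1 + ε / 2) * (2 / d * L) * (j * ((d + 1) / 2))
      ≤ (2 / 3 - ε / 4) * L := by
  have hL : 0 ≤ L := by nlinarith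
  have hj : 0 ≤ j := by linarith
  have hpenalty_eq : (1 + ε / 2) * (2 / d * L) * (j * ((d + 1) / 2))
      = (1 + ε / 2) * (j * L) + (1 + ε / 2) * (j * L) / d := by
    field_simp
  have hextra : 0 ≤ (1 + ε / 2) * (j * L) / d := by positivity
  have h1 : (d + 1) * log 2 ≤ (d + 1) * (ε * L / 32) := by
    gcongr
    linarith [log_two_lt_d9]
  have h2 : 64 * L ≤ ε * d * L := by gcongr
  have h3 : 16 * (ε * L) ≤ d * (ε * L) := by gcongr
  have h4 : (d + 1) * (ε * L) ≤ 8 * j * (ε * L) := by gcongr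
  linarith

lemma cast_choose_le_exp_mul_log {n a : ℕ} (ha : a ≤ n + 1) :
    ((n + 1).choose a : ℝ) ≤ exp ((n + 1 - a) * log (n + 1)) :=
  calc ((n + 1).choose a : ℝ) = ((n + 1).choose (n + 1 - a) : ℕ) := by rw [Nat.choose_symm ha]
    _ ≤ ((n + 1 : ℕ) : ℝ) ^ (n + 1 - a) := by exact_mod_cast Nat.choose_le_pow _ _
    _ = exp ((n + 1 - a) * log (n + 1)) := by
      rw [← exp_log (by positivity : (0 : ℝ) < (n + 1 : ℕ)), ← exp_nat_mul, Nat.cast_sub ha]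
      push_cast
      rfl

lemma cast_choose_le_exp_mul_log_two (n a : ℕ) : (n.choose a : ℝ) ≤ exp (n * log 2) := by
  rw [exp_nat_mul, exp_log two_pos]
  exact_mod_cast Nat.choose_le_two_pow n a

lemma mul_pow_mul_exp_neg_le {c q K β B P E : ℝ} {k : ℕ} (hq : 0 < q) (hc : c ≤ exp K)
    (hP : P ≤ β * B) (hE : K + (1 + k) * log q - P ≤ E) :
    c * q * q ^ k * exp (-(β * B)) ≤ exp E :=
  calc c * q * q ^ k * exp (-(β * B)) ≤ exp K * q * q ^ k * exp (-(β * B)) := by gcongr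
    _ = exp (K + (1 + k) * log q - β * B) := by
      rw [sub_eq_add_neg, exp_add, exp_add, add_mul, one_mul, exp_add, exp_nat_mul, exp_log hq,
        mul_assoc (exp K)]
    _ ≤ exp E := exp_le_exp.2 (by linarith)

lemma choose_mul_pow_mul_exp_le {q ε β : ℝ} {d a : ℕ} (hq : 0 < q) (hε : 0 < ε) (hd : 16 ≤ d)
    (hεd : 64 ≤ ε * d) (hεL : 32 ≤ ε * log q) (hlog : log (d + 1) ≤ log q / 3)
    (hβ : (1 + ε / 2) * (2 / d * log q) ≤ β) (ha : a ≤ d) :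
    (d + 1).choose a * q * q ^ (d + 1 - a) * exp (-(β * bichromaticLowerBound (d + 1) a))
      ≤ exp ((2 / 3 - ε / 4) * log q) := by
  have hd' : (16 : ℝ) ≤ d := by exact_mod_cast hd
  have ha' : (a : ℝ) ≤ d := by exact_mod_cast ha
  have hL : 0 ≤ log q := by have := log_nonneg (by linarith : (1 : ℝ) ≤ d + 1); linarith
  have hβ0 : 0 ≤ β := le_trans (by positivity) hβ
  have hj : ((d + 1 - a : ℕ) : ℝ) = d + 1 - a := by push_cast [ha.trans d.le_succ]; ring
  have hpenalty : ∀ x, 0 ≤ x → x ≤ max (a : ℝ) ((d + 1) / 2) →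
      (1 + ε / 2) * (2 / d * log q) * ((d + 1 - a : ℕ) * x)
        ≤ β * bichromaticLowerBound (d + 1) a := fun x hx0 hx => by
    rw [bichromaticLowerBound]
    push_cast
    rw [← hj]
    gcongr
  by_cases hdominant : 7 * (d + 1) ≤ 8 * a
  · have hdominant' : (7 * (d + 1) : ℝ) ≤ 8 * a := by exact_mod_cast hdominant
    refine mul_pow_mul_exp_neg_le hq ((cast_choose_le_exp_mul_log (ha.trans d.le_succ)).trans ?_)
      (hpenalty _ (by rw [hj]; linarith) (le_max_of_le_left (by rw [hj]; linarith)))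
      (exponent_le_of_dominant_class hε hL (by linarith) (by rw [hj]; linarith)
        (by rw [hj]; linarith))
    rw [← hj]
    gcongr
  · have hdominant' : (8 * a : ℝ) ≤ 7 * (d + 1) := by exact_mod_cast (not_le.1 hdominant).le
    exact mul_pow_mul_exp_neg_le hq (by exact_mod_cast cast_choose_le_exp_mul_log_two (d + 1) a)
      (hpenalty _ (by positivity) (le_max_right _ _))
      (exponent_le_of_no_dominant_class hε hd' hεd hεL (by rw [hj]; linarith))

lemma sum_choose_mul_pow_mul_exp_le {q ε β : ℝ} {d : ℕ} (hq : 0 < q) (hε : 0 < ε) (hd : 16 ≤ d)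
    (hεd : 64 ≤ ε * d) (hεL : 32 ≤ ε * log q) (hlog : log (d + 1) ≤ log q / 3)
    (hβ : (1 + ε / 2) * (2 / d * log q) ≤ β) :
    ∑ a ∈ range (d + 1),
        (d + 1).choose a * q * q ^ (d + 1 - a) * exp (-(β * bichromaticLowerBound (d + 1) a))
      ≤ q * q ^ (-(1 / 4 * ε)) :=
  calc _ ≤ ∑ _a ∈ range (d + 1), exp ((2 / 3 - ε / 4) * log q) := sum_le_sum fun a ha =>
        choose_mul_pow_mul_exp_le hq hε hd hεd hεL hlog hβ (mem_range_succ_iff.1 ha)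
    _ = (d + 1) * exp ((2 / 3 - ε / 4) * log q) := by simp
    _ ≤ exp (log q / 3) * exp ((2 / 3 - ε / 4) * log q) := by
      gcongr
      rw [← exp_log (by positivity : (0 : ℝ) < d + 1)]
      exact exp_le_exp.2 hlog
    _ = exp (log q) * exp (log q * -(1 / 4 * ε)) := by
      rw [← exp_add, ← exp_add]
      congr 1
      ring
    _ = q * q ^ (-(1 / 4 * ε)) := by rw [exp_log hq, rpow_def_of_pos hq]

lemma pottsZ_complete_le {ε β : ℝ} {d q : ℕ} (hε : 0 < ε) (hd : 16 ≤ d) (hεd : 64 ≤ ε * d)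
    (hεlog : 8 ≤ ε * log d) (hq : d ^ 4 ≤ q) (hβ : (1 + ε) * betaO q d ≤ β) :
    pottsZ (⊤ : SimpleGraph (Fin (d + 1))) q β
      ≤ (1 + (q : ℝ) ^ (-(1 / 4 * ε))) * q * exp (β * (d * (d + 1)) / 2) := by
  have hd' : (16 : ℝ) ≤ d := by exact_mod_cast hd
  have hq' : (d : ℝ) ^ 4 ≤ q := by exact_mod_cast hq
  have hq0 : (0 : ℝ) < q := lt_of_lt_of_le (by positivity) hq'
  have hlogd : 4 * log d ≤ log q := by
    have := log_le_log (by positivity) hq'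
    rwa [Real.log_pow, Nat.cast_ofNat] at this
  have hlogd1 : 1 ≤ log d := by
    rw [le_log_iff_exp_le (by positivity)]
    linarith [exp_one_lt_d9]
  have hcube : ((d : ℝ) + 1) ^ 3 ≤ q := (add_one_pow_three_le (by linarith)).trans hq'
  have hlog : log (d + 1) ≤ log q / 3 := by
    have := log_le_log (by positivity) hcube
    rw [Real.log_pow] at this
    push_cast at this
    linarith
  have hβ' : (1 + ε / 2) * (2 / d * log q) ≤ β :=
    (one_add_half_mul_le_one_add_mul_betaO hε (by omega)
      (by nlinarith [pow_nonneg (Nat.cast_nonneg d : (0 : ℝ) ≤ d) 3]) (by linarith)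
      (by nlinarith)).trans hβ
  have hZ := pottsZ_top_le (V := Fin (d + 1)) (Nat.cast_pos.1 hq0) (le_trans (by positivity) hβ')
  rw [Fintype.card_fin, sum_range_succ] at hZ
  calc pottsZ (⊤ : SimpleGraph (Fin (d + 1))) q β
      ≤ exp (β * (d * (d + 1) / 2)) * (∑ a ∈ range (d + 1), (d + 1).choose a * (q : ℝ)
          * q ^ (d + 1 - a) * exp (-(β * bichromaticLowerBound (d + 1) a)) + q) := by
        convert hZ using 3
        · push_cast
          ring
        · simp [bichromaticLowerBound]
    _ ≤ exp (β * (d * (d + 1) / 2)) * (q * q ^ (-(1 / 4 * ε)) + q) := by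
        gcongr
        exact sum_choose_mul_pow_mul_exp_le hq0 hε hd hεd (by nlinarith) hlog hβ'
    _ = (1 + (q : ℝ) ^ (-(1 / 4 * ε))) * q * exp (β * (d * (d + 1)) / 2) := by
        rw [mul_div_assoc β]
        ring

open Filter in
lemma eventually_large_dimension {ε : ℝ} (hε : 0 < ε) :
    ∀ᶠ d : ℕ in atTop, 16 ≤ d ∧ 64 ≤ ε * d ∧ 8 ≤ ε * log d :=
  (eventually_ge_atTop 16).and <|
    ((tendsto_natCast_atTop_atTop.const_mul_atTop hε).eventually_ge_atTop 64).and
      (((tendsto_log_atTop.comp tendsto_natCast_atTop_atTop).const_mul_atTop hε).eventually_ge_atTop 8)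

end Potts

theorem stmt11 :
    ∃ c' : ℝ, 0 < c' ∧
      ∀ ε : ℝ, 0 < ε →
      ∃ d₀ : ℕ,
        ∀ d : ℕ, d₀ ≤ d → ∀ q : ℕ, d ^ 4 ≤ q →
        ∀ β : ℝ, (1 + ε) * betaO q d ≤ β →
          pottsZ (⊤ : SimpleGraph (Fin (d + 1))) q β
            ≤ (1 + (q : ℝ) ^ (-(c' * ε))) * q *
              Real.exp (β * (d * (d + 1)) / 2) := by
  refine ⟨1 / 4, by norm_num, fun ε hε => ?_⟩
  obtain ⟨d₀, hd₀⟩ := Filter.eventually_atTop.1 (Potts.eventually_large_dimension hε)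
  refine ⟨d₀, fun d hd q hq β hβ => ?_⟩
  obtain ⟨h16, hεd, hεlog⟩ := hd₀ d hd
  exact Potts.pottsZ_complete_le hε h16 hεd hεlog hq hβ
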